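/- Let g ∈ G_n with n ≥ 1. Then there are exactly 2ⁿ uphills u with σ(u) = 1 and τ(u) = g, and exactly 2ⁿ downhills u with σ(u) = g and τ(u) = 1. -/

import Mathlib

namespace WGO

/-- Letters: the anchors `1`, `x`, `x'` (written `one`, `x`, `xp`) and 5-tuples. -/
inductive Letter : Type
  | one : Letter
  | x : Letter
  | xp : Letter
  | tup : Letter → Letter → Letter → Letter → Letter → Letter
deriving DecidableEq

/-- The involution on anchors: `x' = xp`, `xp' = x`, `1' = 1` (junk on tuples). -/
def ainv : Letter → Letter
  | .x => .xp
  | .xp => .x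
  | a => a

/-- Left entry `g^l`. -/
def Letter.lft : Letter → Letter
  | .tup l _ _ _ _ => l
  | _ => .one

/-- Left anchor `g^{la}`. -/
def Letter.lfta : Letter → Letter
  | .tup _ la _ _ _ => la
  | _ => .one

/-- Middle entry `g^c`. -/
def Letter.ctr : Letter → Letter
  | .tup _ _ c _ _ => c
  | _ => .one

/-- Right anchor `g^{ra}`. -/
def Letter.rgta : Letter → Letter
  | .tup _ _ _ ra _ => ra
  | _ => .one

/-- Right entry `g^r`. -/
def Letter.rgt : Letter → Letter
  | .tup _ _ _ _ r => r
  | _ => .one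

/-- The 5-tuple `g_{xx'} = (1,1,x,x',1)`. -/
def gxx : Letter := .tup .one .one .x .xp .one

/-- The set of anchors `A = {1, x, x'}`. -/
def AnchorS : Set Letter := {Letter.one, Letter.x, Letter.xp}

/-- The sets `G_{i,e}`. -/
def Ge : ℕ → Set Letter
  | 0 => ∅
  | 1 => {gxx}
  | (i+2) => {h | ∃ g ∈ Ge (i+1),
      h = Letter.tup g (ainv g.lfta) g.lft (ainv g.rgta) g ∨
      h = Letter.tup g (ainv g.rgta) g.lft (ainv g.lfta) g}

/-- The sets `G_{i,d}`. -/
def Gd : ℕ → Set Letter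
  | 0 => ∅
  | 1 => ∅
  | 2 => ∅
  | (i+3) => {h | ∃ l la c ra r, h = Letter.tup l la c ra r ∧
      l ∈ Ge (i+2) ∪ Gd (i+2) ∧ r ∈ Ge (i+2) ∪ Gd (i+2) ∧
      c ∈ Ge (i+1) ∪ Gd (i+1) ∧ la ∈ AnchorS ∧ ra ∈ AnchorS ∧
      l ≠ r ∧
      ((c = l.lft ∧ la = ainv l.lfta) ∨ (c = l.rgt ∧ la = ainv l.rgta)) ∧
      ((c = r.lft ∧ ra = ainv r.lfta) ∨ (c = r.rgt ∧ ra = ainv r.rgta))}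

/-- `G_i = G_{i,e} ∪ G_{i,d}`. -/
def GI (i : ℕ) : Set Letter := Ge i ∪ Gd i

/-- `G⁵ = ⋃_{i ≥ 1} G_i`. -/
def G5 : Set Letter := {g | ∃ i, g ∈ GI i}

/-- `G = G⁵ ∪ A`. -/
def Gset : Set Letter := G5 ∪ AnchorS

/-- `G' = G⁵ ∪ {1}`. -/
def Gp : Set Letter := G5 ∪ {Letter.one}

/-- The height `↑(g)`: `0` on `1` (and anchors), and `i` on members of `G_i`. -/
def ht : Letter → ℕ
  | .tup l _ _ _ _ => ht l + 1
  | _ => 0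

/-- The free semigroup `G⁺` (on the ambient type of letters). -/
abbrev W := FreeSemigroup Letter

/-- One-letter word. -/
def wd : Letter → W := FreeSemigroup.of

/-- The word `g^L = (g^{la})' g^l g^{la}`. -/
def gLw (g : Letter) : W := wd (ainv g.lfta) * wd g.lft * wd g.lfta

/-- The word `g^R = (g^{ra})' g^r g^{ra}`. -/
def gRw (g : Letter) : W := wd (ainv g.rgta) * wd g.rgt * wd g.rgta

/-- The generating relation `ρ_e ∪ ρ_s`. -/
def rhoBase : W → W → Prop := fun u v =>
  (u = wd .x * wd .xp * wd .x ∧ v = wd .x) ∨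
  (u = wd .xp * wd .x * wd .xp ∧ v = wd .xp) ∨
  (u = wd gxx ∧ v = wd .x * wd .xp) ∨
  (∃ g ∈ Gp, u = wd .one * wd g ∧ v = wd g) ∨
  (∃ g ∈ Gp, u = wd g * wd .one ∧ v = wd g) ∨
  (∃ g ∈ Gp, u = wd g * wd g ∧ v = wd g) ∨
  (∃ g ∈ G5, 2 ≤ ht g ∧ u = wd g.ctr * gLw g * wd g ∧ v = wd g) ∨
  (∃ g ∈ G5, 2 ≤ ht g ∧ u = wd g * gRw g * wd g.ctr ∧ v = wd g) ∨
  (∃ g ∈ G5, 2 ≤ ht g ∧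
    u = wd g.rgt * wd g.rgta * wd g * wd (ainv g.lfta) * wd g.lft ∧
    v = wd g.rgt * wd g.rgta * wd g.ctr * wd (ainv g.lfta) * wd g.lft)

/-- The congruence `ρ`: the smallest congruence on `G⁺` containing `ρ_e ∪ ρ_s`. -/
def rho : Con W := conGen rhoBase

/-- The quotient `F¹ = G⁺/ρ`. -/
abbrev F1 := rho.Quotient

/-- The `ρ`-class `[u]`. -/
def cls (u : W) : F1 := (u : F1)

/-- The word of a nonempty list of letters (junk on `[]`). -/
def wordOf : List Letter → W
  | [] => wd .one
  | a :: t => t.foldl (fun w b => w * wd b) (wd a)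

/-! ### Landscapes -/

/-- A landscape datum: the first letter `g₀` together with the list of pairs
`(a₁,g₁), …, (aₙ,gₙ)`, encoding the alternating word `g₀a₁g₁⋯aₙgₙ`. -/
abbrev LS := Letter × List (Letter × Letter)

/-- The last letter `τ(u)`. -/
def lastL (u : LS) : Letter := u.2.foldl (fun _ p => p.2) u.1

/-- The letters `g₀, g₁, …, gₙ` of a landscape datum. -/
def letters (u : LS) : List Letter := u.1 :: u.2.map Prod.snd

/-- The underlying word as a list of letters, `g₀ a₁ g₁ ⋯ aₙ gₙ`. -/
def flat (u : LS) : List Letter := u.1 :: u.2.foldr (fun p r => p.1 :: p.2 :: r) []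

/-- The underlying word in `G⁺`. -/
def toW (u : LS) : W := u.2.foldl (fun w p => w * wd p.1 * wd p.2) (wd u.1)

/-- `u₁ * u₂`: concatenation of landscapes merging the doubled letter `τ(u₁) = σ(u₂)`. -/
def star (u v : LS) : LS := (u.1, u.2 ++ v.2)

/-- The triplet `g₁ a g` is left anchored. -/
def LeftAnchored (g1 a g : Letter) : Prop :=
  g ∈ G5 ∧ ((g1 = g.lft ∧ a = g.lfta) ∨ (g1 = g.rgt ∧ a = g.rgta))

/-- The triplet `g a g₁` is right anchored. -/
def RightAnchored (g a g1 : Letter) : Prop :=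
  g ∈ G5 ∧ ((g1 = g.lft ∧ a = ainv g.lfta) ∨ (g1 = g.rgt ∧ a = ainv g.rgta))

/-- The triplet `g₁ a g₂` is anchored. -/
def Anchored (g1 a g2 : Letter) : Prop :=
  LeftAnchored g1 a g2 ∨ RightAnchored g1 a g2

/-- All consecutive triplets are anchored. -/
def Chain : Letter → List (Letter × Letter) → Prop
  | _, [] => True
  | g, (a, g') :: t => Anchored g a g' ∧ Chain g' t

/-- `u` is a landscape. -/
def IsLandscape (u : LS) : Prop :=
  u.1 ∈ Gp ∧ (∀ p ∈ u.2, p.1 ∈ AnchorS ∧ p.2 ∈ Gp) ∧ Chain u.1 u.2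

/-- Each step goes up: `g_{j-1} ∈ {gⱼ^l, gⱼ^r}`. -/
def UpChain : Letter → List (Letter × Letter) → Prop
  | _, [] => True
  | g, (_, g') :: t => (g = g'.lft ∨ g = g'.rgt) ∧ UpChain g' t

/-- Each step goes down: `gⱼ ∈ {g_{j-1}^l, g_{j-1}^r}`. -/
def DownChain : Letter → List (Letter × Letter) → Prop
  | _, [] => True
  | g, (_, g') :: t => (g' = g.lft ∨ g' = g.rgt) ∧ DownChain g' t

/-- `u` is an uphill. -/
def IsUphill (u : LS) : Prop := IsLandscape u ∧ u.2 ≠ [] ∧ UpChain u.1 u.2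

/-- `u` is a downhill. -/
def IsDownhill (u : LS) : Prop := IsLandscape u ∧ u.2 ≠ [] ∧ DownChain u.1 u.2

/-- The letter `gⱼ` is a river of `u` (an interior letter with both neighbours one higher). -/
def IsRiverAt (u : LS) (j : ℕ) : Prop :=
  0 < j ∧ j + 1 < (letters u).length ∧
  ht ((letters u).getD (j-1) .one) = ht ((letters u).getD j .one) + 1 ∧
  ht ((letters u).getD (j+1) .one) = ht ((letters u).getD j .one) + 1

/-- `u` has no rivers. -/
def NoRivers (u : LS) : Prop := ∀ j, ¬ IsRiverAt u j

/-- `u` is a mountain range: a landscape with `σ(u) = τ(u) = 1`. -/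
def IsMountainRange (u : LS) : Prop :=
  IsLandscape u ∧ u.1 = Letter.one ∧ lastL u = Letter.one

/-- `u` is a mountain: a mountain range with no rivers. -/
def IsMountain (u : LS) : Prop := IsMountainRange u ∧ NoRivers u

/-- Uplifting of a river: `u → v`. -/
def Uplift (u v : LS) : Prop :=
  v.1 = u.1 ∧ ∃ t1 a gr b gn t2,
    u.2 = t1 ++ (a, gr) :: (b, gn) :: t2 ∧
    ht (lastL (u.1, t1)) = ht gr + 1 ∧ ht gn = ht gr + 1 ∧
    ((lastL (u.1, t1) = gn ∧ a = ainv b ∧ v.2 = t1 ++ t2) ∨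
     (¬(lastL (u.1, t1) = gn ∧ a = ainv b) ∧
       v.2 = t1 ++ (a, Letter.tup gn (ainv b) gr a (lastL (u.1, t1))) :: (b, gn) :: t2))

/-- `→*`: iterated uplifting of rivers. -/
def UpliftStar : LS → LS → Prop := Relation.ReflTransGen Uplift

/-! ### The maps β₁ and related functions -/

/-- `g^{cⁿ}`: the base of the tower of centers (the first entry of `β₁(g)`'s hills). -/
def cbase : Letter → Letter
  | .tup l la c ra r => if ht l = 0 then Letter.tup l la c ra r else cbase c
  | g => g

/-- The pair list of the uphill `β_{1,l}(g)` (starting letter `cbase g`). -/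
def lPairs : Letter → List (Letter × Letter)
  | .tup l la c ra r =>
      if ht l = 0 then []
      else lPairs c ++ [(ainv la, l), (la, Letter.tup l la c ra r)]
  | _ => []

/-- The pair list of the downhill `β_{1,r}(g)` (starting letter `g`). -/
def rPairs : Letter → List (Letter × Letter)
  | .tup l _ c ra r =>
      if ht l = 0 then []
      else (ainv ra, r) :: (ra, c) :: rPairs c
  | _ => []

/-- `β₁` on a single letter of `G`. -/
def beta1L : Letter → LS
  | .one => (.one, [])
  | .x => (.one, [(.one, gxx), (.x, .one)])
  | .xp => (.one, [(.xp, gxx), (.one, .one)])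
  | g => if ht g % 2 = 0 then (cbase g, lPairs g ++ rPairs g)
         else (.one, (.one, cbase g) :: (lPairs g ++ rPairs g ++ [(.one, .one)]))

/-- `β₁` on a word (given as a list of letters): the `*`-product of the `β₁` of its letters. -/
def beta1W (l : List Letter) : LS := (.one, (l.map (fun h => (beta1L h).2)).flatten)

/-! ### Hills of mountains, peaks, reverses -/

/-- Pair list of the maximal uphill prefix. -/
def lamLPairs : Letter → List (Letter × Letter) → List (Letter × Letter)
  | _, [] => []
  | g, (a, g') :: t => if ht g < ht g' then (a, g') :: lamLPairs g' t else []

/-- The left hill `λ_l(u)` of a mountain. -/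
def lamL (u : LS) : LS := (u.1, lamLPairs u.1 u.2)

/-- The peak `κ(u)` of a mountain. -/
def peak (u : LS) : Letter := lastL (lamL u)

/-- The right hill `λ_r(u)` of a mountain. -/
def lamR (u : LS) : LS := (peak u, u.2.drop (lamLPairs u.1 u.2).length)

/-- Pair list of the reverse of a landscape. -/
def revPairs : Letter → List (Letter × Letter) → List (Letter × Letter)
  | _, [] => []
  | g, (a, g') :: t => revPairs g' t ++ [(ainv a, g)]

/-- The reverse `ū` of a landscape `u`. -/
def rev (u : LS) : LS := (lastL u, revPairs u.1 u.2)

/-! ### Green's relations on `F¹` -/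

/-- `s ≤_R t` : `s F¹ ⊆ t F¹`. -/
def leR (s t : F1) : Prop := ∀ y : F1, (∃ m, y = s * m) → ∃ m, y = t * m

/-- `s ≤_L t` : `F¹ s ⊆ F¹ t`. -/
def leL (s t : F1) : Prop := ∀ y : F1, (∃ m, y = m * s) → ∃ m, y = m * t

/-- `s ≤_J t` : `F¹ s F¹ ⊆ F¹ t F¹`. -/
def leJ (s t : F1) : Prop := ∀ y : F1, (∃ p q, y = p * s * q) → ∃ p q, y = p * t * q

/-- Green's relation `R`. -/
def Rrel (s t : F1) : Prop := leR s t ∧ leR t s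

/-- Green's relation `L`. -/
def Lrel (s t : F1) : Prop := leL s t ∧ leL t s

/-- Green's relation `J`. -/
def Jrel (s t : F1) : Prop := leJ s t ∧ leJ t s

/-- Green's relation `H = R ∩ L`. -/
def Hrel (s t : F1) : Prop := Rrel s t ∧ Lrel s t

/-- Green's relation `D = L ∨ R` (the join of the equivalences `L` and `R`). -/
def Drel : F1 → F1 → Prop := Relation.EqvGen (fun s t => Lrel s t ∨ Rrel s t)

/-- The sandwich set `S(e,f)` in `F¹`. -/
def sandw (e f : F1) : Set F1 :=
  {h | h * h = h ∧ f * h = h ∧ h * e = h ∧ e * h * f = e * f}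

/-- The ground `ε(g)`. -/
def ground : Letter → Set Letter
  | .tup l la c ra r => ground l ∪ {Letter.tup l la c ra r} ∪ ground r
  | g => {g}

/-- `F = F¹ \ {[1]}`. -/
def Fset : Set F1 := {s | s ≠ cls (wd .one)}

/-- A valley: a downhill followed by an uphill, merged at the lowest letter. -/
def IsValley (w : LS) : Prop :=
  ∃ d u : LS, IsDownhill d ∧ IsUphill u ∧ lastL d = u.1 ∧ w = star d u

/-- A canyon: a valley with `σ(w) = τ(w)`. -/
def IsCanyon (w : LS) : Prop := IsValley w ∧ w.1 = lastL w

/-- A gorge: a canyon with `w →* σ(w)`. -/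
def IsGorge (w : LS) : Prop := IsCanyon w ∧ UpliftStar w (w.1, [])

/-!
Every `g ∈ G_n` is a 5-tuple whose entries `g^l, g^r` lie in `G_{n-1}` (with `G_0 = {1}`) and
whose pairs `(g^{la}, g^l)`, `(g^{ra}, g^r)` differ. The last step of an uphill ending at `g`
cannot be right anchored (that would make `g` a proper subterm of itself), so it is one of the
two triplets `g^l g^{la} g` and `g^r g^{ra} g`; dually the first step of a downhill leaving `g`
is `g (g^{la})' g^l` or `g (g^{ra})' g^r`. Hence the number of hills doubles with each level.
-/

lemma ainv_involutive : Function.Involutive ainv := by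
  intro a; cases a <;> rfl

lemma ainv_mem_AnchorS {a : Letter} (h : a ∈ AnchorS) : ainv a ∈ AnchorS := by
  rcases h with rfl | rfl | rfl <;> simp [ainv, AnchorS]

/-- `G_i` with the paper's convention `G_0 = {1}` (whereas `GI 0 = ∅`). -/
def GpI : ℕ → Set Letter
  | 0 => {Letter.one}
  | n + 1 => GI (n + 1)

/-- The shape of every element of `G_{n+1}`. -/
structure IsNode (n : ℕ) (g : Letter) : Prop where
  eq_tup : g = .tup g.lft g.lfta g.ctr g.rgta g.rgt
  lfta_mem : g.lfta ∈ AnchorS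
  rgta_mem : g.rgta ∈ AnchorS
  lft_mem : g.lft ∈ GpI n
  rgt_mem : g.rgt ∈ GpI n
  ne : (g.lfta, g.lft) ≠ (g.rgta, g.rgt)

lemma anchors_of_mem_Ge : ∀ {n : ℕ} {g : Letter}, g ∈ Ge n →
    g.lfta ∈ AnchorS ∧ g.rgta ∈ AnchorS ∧ g.lfta ≠ g.rgta
  | 1, g, h => by
    rw [Ge, Set.mem_singleton_iff] at h
    subst h
    simp [gxx, Letter.lfta, Letter.rgta, AnchorS]
  | n + 2, g, h => by
    obtain ⟨g', hg', rfl | rfl⟩ := h <;>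
    · obtain ⟨hla, hra, hne⟩ := anchors_of_mem_Ge hg'
      simp only [Letter.lfta, Letter.rgta, ne_eq, ainv_involutive.injective.eq_iff]
      exact ⟨ainv_mem_AnchorS ‹_›, ainv_mem_AnchorS ‹_›, by tauto⟩

lemma isNode_of_mem_Ge {n : ℕ} {g : Letter} (h : g ∈ Ge (n + 1)) : IsNode n g := by
  obtain ⟨hla, hra, hne⟩ := anchors_of_mem_Ge h
  have hpair : (g.lfta, g.lft) ≠ (g.rgta, g.rgt) := fun heq => hne (Prod.ext_iff.1 heq).1
  cases n with
  | zero =>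
    rw [Ge, Set.mem_singleton_iff] at h
    subst h
    exact ⟨rfl, hla, hra, rfl, rfl, hpair⟩
  | succ n =>
    obtain ⟨g', hg', rfl | rfl⟩ := h <;>
      exact ⟨rfl, hla, hra, Or.inl hg', Or.inl hg', hpair⟩

lemma isNode_of_mem_Gd {n : ℕ} {g : Letter} (h : g ∈ Gd (n + 1)) : IsNode n g := by
  match n, h with
  | n + 2, h =>
    obtain ⟨l, la, c, ra, r, rfl, hl, hr, -, hla, hra, hlr, -⟩ := h
    exact ⟨rfl, hla, hra, hl, hr, fun heq => hlr (Prod.ext_iff.1 heq).2⟩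

lemma isNode_of_mem_GI {n : ℕ} {g : Letter} (h : g ∈ GI (n + 1)) : IsNode n g :=
  h.elim isNode_of_mem_Ge isNode_of_mem_Gd

lemma exists_isNode_of_mem_G5 {g : Letter} (h : g ∈ G5) : ∃ n, IsNode n g := by
  obtain ⟨_ | n, hg⟩ := h
  · simp [GI, Ge, Gd] at hg
  · exact ⟨n, isNode_of_mem_GI hg⟩

lemma ne_one_of_mem_G5 {g : Letter} (h : g ∈ G5) : g ≠ .one := by
  obtain ⟨n, hg⟩ := exists_isNode_of_mem_G5 h
  rw [hg.eq_tup]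
  exact Letter.noConfusion

lemma sizeOf_lt_of_mem_G5 {g c : Letter} (hg : g ∈ G5) (hc : c = g.lft ∨ c = g.rgt) :
    sizeOf c < sizeOf g := by
  obtain ⟨n, hn⟩ := exists_isNode_of_mem_G5 hg
  rw [hn.eq_tup]
  rcases hc with rfl | rfl <;> simp only [Letter.tup.sizeOf_spec] <;> omega

lemma lastL_cons (g a h : Letter) (t : List (Letter × Letter)) :
    lastL (g, (a, h) :: t) = lastL (h, t) := rfl

lemma lastL_snoc (g a h : Letter) (t : List (Letter × Letter)) :
    lastL (g, t ++ [(a, h)]) = h := by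
  simp [lastL]

lemma chain_snoc (g a h : Letter) (t : List (Letter × Letter)) :
    Chain g (t ++ [(a, h)]) ↔ Chain g t ∧ Anchored (lastL (g, t)) a h := by
  induction t generalizing g with
  | nil => simp [Chain, lastL]
  | cons p t ih => obtain ⟨b, h'⟩ := p; simp [Chain, ih, lastL_cons, and_assoc]

lemma upChain_snoc (g a h : Letter) (t : List (Letter × Letter)) :
    UpChain g (t ++ [(a, h)]) ↔ UpChain g t ∧ (lastL (g, t) = h.lft ∨ lastL (g, t) = h.rgt) := by
  induction t generalizing g with
  | nil => simp [UpChain, lastL]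
  | cons p t ih => obtain ⟨b, h'⟩ := p; simp [UpChain, ih, lastL_cons, and_assoc]

lemma isLandscape_cons {g a h : Letter} {t : List (Letter × Letter)} :
    IsLandscape (g, (a, h) :: t) ↔
      g ∈ Gp ∧ a ∈ AnchorS ∧ Anchored g a h ∧ IsLandscape (h, t) := by
  simp only [IsLandscape, Chain, List.mem_cons, forall_eq_or_imp]
  tauto

lemma isLandscape_snoc {g a h : Letter} {t : List (Letter × Letter)} :
    IsLandscape (g, t ++ [(a, h)]) ↔
      IsLandscape (g, t) ∧ a ∈ AnchorS ∧ h ∈ Gp ∧ Anchored (lastL (g, t)) a h := by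
  simp only [IsLandscape, chain_snoc, List.mem_append, List.mem_singleton, or_imp,
    forall_and, forall_eq]
  tauto

/-- Uphills from `1` to `g`, except that the one-letter landscape `1` is admitted for `g = 1`. -/
def upPaths (g : Letter) : Set LS :=
  {u | IsLandscape u ∧ UpChain u.1 u.2 ∧ u.1 = .one ∧ lastL u = g}

/-- Downhills from `g` to `1`, except that the one-letter landscape `1` is admitted for `g = 1`. -/
def downPaths (g : Letter) : Set LS :=
  {u | IsLandscape u ∧ DownChain u.1 u.2 ∧ u.1 = g ∧ lastL u = .one}

def snocStep (a g : Letter) (v : LS) : LS := (v.1, v.2 ++ [(a, g)])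

def consStep (g a : Letter) (v : LS) : LS := (g, (a, v.1) :: v.2)

lemma snocStep_injective (a g : Letter) : Function.Injective (snocStep a g) := by
  rintro ⟨v₁, v₂⟩ ⟨w₁, w₂⟩ h
  simpa [snocStep] using h

lemma consStep_injective (g a : Letter) : Function.Injective (consStep g a) := by
  rintro ⟨v₁, v₂⟩ ⟨w₁, w₂⟩ h
  simpa [consStep] using h

lemma upPaths_one : upPaths .one = {(.one, [])} := by
  ext ⟨g₀, t⟩
  simp only [upPaths, Set.mem_ofPred_eq, Set.mem_singleton_iff, Prod.mk.injEq]
  constructor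
  · rintro ⟨hu, hup, rfl, hlast⟩
    refine ⟨rfl, ?_⟩
    obtain rfl | ⟨t, ⟨a, h⟩, rfl⟩ := List.eq_nil_or_concat' t
    · rfl
    rw [lastL_snoc] at hlast
    subst hlast
    obtain ⟨-, -, -, hanch⟩ := isLandscape_snoc.1 hu
    obtain ⟨-, hprev⟩ := (upChain_snoc _ _ _ _).1 hup
    have hprev : lastL (Letter.one, t) = .one := hprev.elim id id
    rw [hprev] at hanch
    exact absurd rfl (ne_one_of_mem_G5 (hanch.elim (·.1) (·.1)))
  · rintro ⟨rfl, rfl⟩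
    exact ⟨⟨Or.inr rfl, by simp, trivial⟩, trivial, rfl, rfl⟩

lemma downPaths_one : downPaths .one = {(.one, [])} := by
  ext ⟨g₀, t⟩
  simp only [downPaths, Set.mem_ofPred_eq, Set.mem_singleton_iff, Prod.mk.injEq]
  constructor
  · rintro ⟨hu, hdown, rfl, -⟩
    refine ⟨rfl, ?_⟩
    obtain _ | ⟨⟨a, h⟩, t⟩ := t
    · rfl
    obtain ⟨-, -, hanch, -⟩ := isLandscape_cons.1 hu
    have hh : h = .one := hdown.1.elim id id
    subst hh
    exact absurd rfl (ne_one_of_mem_G5 (hanch.elim (·.1) (·.1)))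
  · rintro ⟨rfl, rfl⟩
    exact ⟨⟨Or.inr rfl, by simp, trivial⟩, trivial, rfl, rfl⟩

lemma snocStep_mem_upPaths {c a g : Letter} {v : LS} (ha : a ∈ AnchorS)
    (hanch : LeftAnchored c a g) (hv : v ∈ upPaths c) : snocStep a g v ∈ upPaths g := by
  obtain ⟨hu, hup, h₁, hlast⟩ := hv
  rw [← hlast] at hanch
  refine ⟨isLandscape_snoc.2 ⟨hu, ha, Or.inl hanch.1, Or.inl hanch⟩,
    (upChain_snoc _ _ _ _).2 ⟨hup, hanch.2.imp And.left And.left⟩, h₁, lastL_snoc _ _ _ _⟩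

lemma consStep_mem_downPaths {g a c : Letter} {v : LS} (ha : a ∈ AnchorS)
    (hanch : RightAnchored g a c) (hv : v ∈ downPaths c) : consStep g a v ∈ downPaths g := by
  obtain ⟨hu, hdown, rfl, hlast⟩ := hv
  exact ⟨isLandscape_cons.2 ⟨Or.inl hanch.1, ha, Or.inr hanch, hu⟩,
    ⟨hanch.2.imp And.left And.left, hdown⟩, rfl, hlast⟩

/-- Only left-anchored last steps occur: a right-anchored one would make `g` and its
predecessor children of each other. -/
lemma upPaths_eq_union {g : Letter} (hg : g ∈ G5) :
    upPaths g = snocStep g.lfta g '' upPaths g.lft ∪ snocStep g.rgta g '' upPaths g.rgt := by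
  obtain ⟨n, hn⟩ := exists_isNode_of_mem_G5 hg
  refine Set.Subset.antisymm ?_ ?_
  · rintro ⟨g₀, t⟩ ⟨hu, hup, rfl, hlast⟩
    dsimp only at hup
    obtain rfl | ⟨t, ⟨a, h⟩, rfl⟩ := List.eq_nil_or_concat' t
    · exact absurd hlast.symm (ne_one_of_mem_G5 hg)
    rw [lastL_snoc] at hlast
    subst hlast
    obtain ⟨hu, -, -, hanch⟩ := isLandscape_snoc.1 hu
    obtain ⟨hup, hprev⟩ := (upChain_snoc _ _ _ _).1 hup
    have hv {c : Letter} (hc : lastL (.one, t) = c) : (.one, t) ∈ upPaths c := ⟨hu, hup, rfl, hc⟩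
    rcases hanch with ⟨-, ⟨hc, rfl⟩ | ⟨hc, rfl⟩⟩ | ⟨hprev₅, hchild⟩
    · exact Or.inl ⟨_, hv hc, rfl⟩
    · exact Or.inr ⟨_, hv hc, rfl⟩
    · have := sizeOf_lt_of_mem_G5 hg hprev
      have := sizeOf_lt_of_mem_G5 hprev₅ (hchild.imp And.left And.left)
      omega
  · rintro _ (⟨v, hv, rfl⟩ | ⟨v, hv, rfl⟩)
    · exact snocStep_mem_upPaths hn.lfta_mem ⟨hg, Or.inl ⟨rfl, rfl⟩⟩ hv
    · exact snocStep_mem_upPaths hn.rgta_mem ⟨hg, Or.inr ⟨rfl, rfl⟩⟩ hv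

lemma downPaths_eq_union {g : Letter} (hg : g ∈ G5) :
    downPaths g = consStep g (ainv g.lfta) '' downPaths g.lft ∪
      consStep g (ainv g.rgta) '' downPaths g.rgt := by
  obtain ⟨n, hn⟩ := exists_isNode_of_mem_G5 hg
  refine Set.Subset.antisymm ?_ ?_
  · rintro ⟨g₀, t⟩ ⟨hu, hdown, h₀, hlast⟩
    dsimp only at hdown h₀
    subst h₀
    obtain _ | ⟨⟨a, h⟩, t⟩ := t
    · exact absurd hlast (ne_one_of_mem_G5 hg)
    obtain ⟨-, -, hanch, hu⟩ := isLandscape_cons.1 hu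
    have hv : (h, t) ∈ downPaths h := ⟨hu, hdown.2, rfl, hlast⟩
    rcases hanch with ⟨hh₅, hchild⟩ | ⟨-, ⟨rfl, rfl⟩ | ⟨rfl, rfl⟩⟩
    · have := sizeOf_lt_of_mem_G5 hg hdown.1
      have := sizeOf_lt_of_mem_G5 hh₅ (hchild.imp And.left And.left)
      omega
    · exact Or.inl ⟨_, hv, rfl⟩
    · exact Or.inr ⟨_, hv, rfl⟩
  · rintro _ (⟨v, hv, rfl⟩ | ⟨v, hv, rfl⟩)
    · exact consStep_mem_downPaths (ainv_mem_AnchorS hn.lfta_mem) ⟨hg, Or.inl ⟨rfl, rfl⟩⟩ hv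
    · exact consStep_mem_downPaths (ainv_mem_AnchorS hn.rgta_mem) ⟨hg, Or.inr ⟨rfl, rfl⟩⟩ hv

lemma encard_upPaths : ∀ {n : ℕ} {g : Letter}, g ∈ GpI n → (upPaths g).encard = 2 ^ n
  | 0, _, rfl => by simp [upPaths_one]
  | n + 1, g, hg => by
    have hn := isNode_of_mem_GI hg
    have hdisj : Disjoint (snocStep g.lfta g '' upPaths g.lft)
        (snocStep g.rgta g '' upPaths g.rgt) := by
      rw [Set.disjoint_left]
      rintro _ ⟨v, hv, rfl⟩ ⟨w, hw, heq⟩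
      simp only [snocStep, Prod.mk.injEq] at heq
      obtain ⟨h₂, hlast⟩ := List.append_inj' heq.2 rfl
      obtain rfl : w = v := Prod.ext heq.1 h₂
      simp only [List.cons.injEq, Prod.mk.injEq, and_true] at hlast
      exact hn.ne (Prod.ext hlast.symm (hv.2.2.2.symm.trans hw.2.2.2))
    rw [upPaths_eq_union ⟨n + 1, hg⟩, Set.encard_union_eq hdisj,
      (snocStep_injective _ _).encard_image, (snocStep_injective _ _).encard_image,
      encard_upPaths hn.lft_mem, encard_upPaths hn.rgt_mem, pow_succ, mul_two]

lemma encard_downPaths : ∀ {n : ℕ} {g : Letter}, g ∈ GpI n → (downPaths g).encard = 2 ^ n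
  | 0, _, rfl => by simp [downPaths_one]
  | n + 1, g, hg => by
    have hn := isNode_of_mem_GI hg
    have hdisj : Disjoint (consStep g (ainv g.lfta) '' downPaths g.lft)
        (consStep g (ainv g.rgta) '' downPaths g.rgt) := by
      rw [Set.disjoint_left]
      rintro _ ⟨v, hv, rfl⟩ ⟨w, hw, heq⟩
      simp only [consStep, Prod.mk.injEq, List.cons.injEq] at heq
      exact hn.ne (Prod.ext (ainv_involutive.injective heq.2.1.1).symm
        (hv.2.2.1.symm.trans (heq.2.1.2.symm.trans hw.2.2.1)))
    rw [downPaths_eq_union ⟨n + 1, hg⟩, Set.encard_union_eq hdisj,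
      (consStep_injective _ _).encard_image, (consStep_injective _ _).encard_image,
      encard_downPaths hn.lft_mem, encard_downPaths hn.rgt_mem, pow_succ, mul_two]

lemma setOf_isUphill_eq_upPaths {g : Letter} (hg : g ≠ .one) :
    {u : LS | IsUphill u ∧ u.1 = .one ∧ lastL u = g} = upPaths g := by
  ext ⟨g₀, t⟩
  refine ⟨fun ⟨⟨hu, _, hup⟩, h₁, hlast⟩ => ⟨hu, hup, h₁, hlast⟩, fun ⟨hu, hup, h₁, hlast⟩ => ?_⟩
  refine ⟨⟨hu, ?_, hup⟩, h₁, hlast⟩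
  rintro rfl
  exact hg (hlast.symm.trans h₁)

lemma setOf_isDownhill_eq_downPaths {g : Letter} (hg : g ≠ .one) :
    {u : LS | IsDownhill u ∧ u.1 = g ∧ lastL u = .one} = downPaths g := by
  ext ⟨g₀, t⟩
  refine ⟨fun ⟨⟨hu, _, hdown⟩, h₁, hlast⟩ => ⟨hu, hdown, h₁, hlast⟩, fun ⟨hu, hdown, h₁, hlast⟩ => ?_⟩
  refine ⟨⟨hu, ?_, hdown⟩, h₁, hlast⟩
  rintro rfl
  exact hg (h₁.symm.trans hlast)

theorem statement5_general (n : ℕ) (g : Letter) (hg : g ∈ GI n) :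
    {u : LS | IsUphill u ∧ u.1 = Letter.one ∧ lastL u = g}.ncard = 2 ^ n ∧
    {u : LS | IsDownhill u ∧ u.1 = g ∧ lastL u = Letter.one}.ncard = 2 ^ n := by
  obtain _ | n := n
  · simp [GI, Ge, Gd] at hg
  have hg₁ : g ≠ .one := ne_one_of_mem_G5 ⟨n + 1, hg⟩
  rw [setOf_isUphill_eq_upPaths hg₁, setOf_isDownhill_eq_downPaths hg₁, Set.ncard_def,
    Set.ncard_def, encard_upPaths (n := n + 1) hg, encard_downPaths (n := n + 1) hg]
  simp

/-- Corollary `counthills`: if `g ∈ G_n`, there are `2ⁿ` uphills from `1` to `g` and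
`2ⁿ` downhills from `g` to `1`. -/
theorem statement5 (n : ℕ) (hn : 1 ≤ n) (g : Letter) (hg : g ∈ GI n) :
    {u : LS | IsUphill u ∧ u.1 = Letter.one ∧ lastL u = g}.ncard = 2 ^ n ∧
    {u : LS | IsDownhill u ∧ u.1 = g ∧ lastL u = Letter.one}.ncard = 2 ^ n :=
  statement5_general n g hg

end WGO
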